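/- arXiv:2410.00548 — 3 statements merged into one kernel-verified Lean document; each statement's English description precedes it below -/
import Mathlib

section
/- Let X, Y ⊆ ℕ^d. If for every k ≥ 1 there exist x_k ∈ X and y_k ∈ Y with x_k ∼_k y_k, then there is no recognizable set S ⊆ ℕ^d with X ⊆ S and S ∩ Y = ∅. -/
def simk (d k : ℕ) (u v : Fin d → ℕ) : Prop :=
  ∀ i : Fin d, (u i = v i ∧ u i ≤ k) ∨ (u i > k ∧ v i > k ∧ u i % k = v i % k)

/-- A subset of `ℕ^d` is recognizable if it is the full preimage of its image
under an additive monoid homomorphism into a finite (additive) monoid. -/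
def Recognizable {d : ℕ} (S : Set (Fin d → ℕ)) : Prop :=
  ∃ (F : Type) (_ : AddMonoid F) (_ : Finite F) (φ : (Fin d → ℕ) →+ F),
    φ ⁻¹' (φ '' S) = S

lemma eventually_periodic_nsmul {F : Type} [AddMonoid F] [Finite F] (a : F) :
    ∃ N p : ℕ, 1 ≤ p ∧ ∀ n, N ≤ n → (n + p) • a = n • a := by
  obtain ⟨m, n, hne, heq⟩ := Finite.exists_ne_map_eq_of_infinite (fun n : ℕ => n • a)
  wlog hlt : m < n generalizing m n
  · exact this n m hne.symm heq.symm (by omega)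
  refine ⟨m, n - m, by omega, fun j hj => ?_⟩
  have h1 : j + (n - m) = (j - m) + n := by omega
  have h2 : j = (j - m) + m := by omega
  rw [h1, add_nsmul, ← heq, ← add_nsmul, ← h2]

lemma nsmul_eq_of_period {F : Type} [AddMonoid F] (a : F)
    (N p : ℕ) (hper : ∀ n, N ≤ n → (n + p) • a = n • a) :
    ∀ c j, N ≤ j → (j + c * p) • a = j • a := by
  intro c
  induction c with
  | zero => simp
  | succ c ih =>
    intro j hj
    have : j + (c + 1) * p = (j + c * p) + p := by ring
    rw [this, hper _ (by omega), ih j hj]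

lemma key_k {F : Type} [AddMonoid F] [Finite F] :
    ∃ k : ℕ, 1 ≤ k ∧ ∀ (a : F) (n m : ℕ), k < n → k < m → n % k = m % k →
      n • a = m • a := by
  classical
  have := Fintype.ofFinite F
  choose N p hp hper using fun a : F => eventually_periodic_nsmul a
  have hprod : 1 ≤ ∏ a : F, p a := Finset.one_le_prod' (fun a _ => hp a)
  refine ⟨(∏ a : F, p a) * (1 + ∑ a : F, N a), ?_, ?_⟩
  · exact Nat.one_le_iff_ne_zero.mpr (by positivity)
  · set k := (∏ a : F, p a) * (1 + ∑ a : F, N a) with hk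
    intro a n m hn hm hmod
    have hpk : p a ∣ k := Dvd.dvd.mul_right (Finset.dvd_prod_of_mem p (Finset.mem_univ a)) _
    have hNk : N a ≤ k := by
      have h1 : N a ≤ ∑ a : F, N a := Finset.single_le_sum (fun a _ => Nat.zero_le _) (Finset.mem_univ a)
      calc N a ≤ 1 + ∑ a : F, N a := le_trans h1 (Nat.le_add_left _ 1)
        _ = 1 * (1 + ∑ a : F, N a) := (one_mul _).symm
        _ ≤ k := Nat.mul_le_mul_right _ hprod
    obtain ⟨t, ht⟩ := hpk
    have hkpos : 0 < k := by rw [hk]; positivity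
    have main : ∀ x : ℕ, k < x → x • a = (x % k + k) • a := by
      intro x hx
      have hc : x = (x % k + k) + ((x / k - 1) * t) * p a := by
        have h0 : x / k * k + x % k = x := Nat.div_add_mod' x k
        have hd : 1 ≤ x / k := (Nat.one_le_div_iff hkpos).mpr hx.le
        have h3 : ((x / k - 1) * t) * p a = (x / k - 1) * k := by
          rw [mul_assoc, mul_comm t (p a), ← ht]
        have h2 : (x / k - 1) * k + 1 * k = (x / k) * k := by
          rw [← add_mul]; congr 1; omega
        rw [h3]; omega
      calc x • a = ((x % k + k) + ((x / k - 1) * t) * p a) • a := by rw [← hc]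
        _ = (x % k + k) • a :=
          nsmul_eq_of_period a (N a) (p a) (hper a) _ _ (by omega)
    rw [main n hn, main m hm, hmod]

theorem inseparable_of_simk (d : ℕ) (X Y : Set (Fin d → ℕ))
    (h : ∀ k : ℕ, 1 ≤ k → ∃ x ∈ X, ∃ y ∈ Y, simk d k x y) :
    ¬ ∃ S : Set (Fin d → ℕ), Recognizable S ∧ X ⊆ S ∧ S ∩ Y = ∅ := by
  rintro ⟨S, ⟨F, _, _, φ, hφ⟩, hXS, hSY⟩
  obtain ⟨k, hk1, hk⟩ := key_k (F := F)
  obtain ⟨x, hx, y, hy, hsim⟩ := h k hk1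
  have hsingle : ∀ (i : Fin d) (n : ℕ), Pi.single i n = n • (Pi.single i 1 : Fin d → ℕ) := by
    intro i n
    funext j
    by_cases hij : j = i
    · subst hij; simp
    · simp [Pi.single_eq_of_ne hij]
  have hdecomp : ∀ u : Fin d → ℕ,
      φ u = ((List.finRange d).map (fun i => (u i) • φ (Pi.single i 1))).sum := by
    intro u
    have h1 : u = ((List.finRange d).map (fun i => Pi.single i (u i))).sum := by
      rw [← Fin.sum_univ_def, Finset.univ_sum_single]
    conv_lhs => rw [h1]
    rw [map_list_sum, List.map_map]
    have h2 : (⇑φ ∘ fun i => Pi.single i (u i)) = fun i => (u i) • φ (Pi.single i 1) := by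
      funext i
      simp only [Function.comp_apply]
      rw [hsingle i (u i), map_nsmul]
    rw [h2]
  have hφxy : φ x = φ y := by
    rw [hdecomp, hdecomp]
    have : (fun i => (x i) • φ (Pi.single i 1)) = (fun i => (y i) • φ (Pi.single i 1)) := by
      funext i
      rcases hsim i with ⟨heq, _⟩ | ⟨hxk, hyk, hmod⟩
      · rw [heq]
      · exact hk _ _ _ hxk hyk hmod
    rw [this]
  have hyS : y ∈ S := by
    rw [← hφ]
    exact ⟨x, hXS hx, hφxy⟩
  exact Set.eq_empty_iff_forall_notMem.mp hSY y ⟨hyS, hy⟩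
end

section
/- In a finite directed graph with edge set T and vertex set Q, define the boundary map ∂ : ℕ^T → ℤ^Q by ∂(e_t) = e_{target(t)} − e_{source(t)}. A vector u ∈ ℕ^T satisfies ∂(u) = 0 if and only if u is a finite sum of (Parikh images of) cycles of the graph. -/
/-- A cycle in a directed graph with edge source/target maps: a non-empty list
of edges where consecutive edges are composable and the last edge returns to
the source of the first. -/
def IsCycle {T Q : Type*} (src tgt : T → Q) (c : List T) : Prop :=
  c ≠ [] ∧ c.Chain' (fun a b => tgt a = src b) ∧
    ∀ h : c ≠ [], tgt (c.getLast h) = src (c.head h)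

/-!
Along a cycle the list of targets is the list of sources rotated by one, so every vertex is
entered as often as it is left and the Parikh image of a cycle has boundary zero; the boundary
is additive. Conversely, in a nonzero flow every edge of the support is followed by another
edge of the support. A choice of such successors is a self-map of the finite support, and a
periodic orbit of it is a simple cycle inside the support. Subtracting its Parikh image leaves
a flow of smaller total weight, and induction on the weight finishes.
-/

open Finset Function

theorem Function.exists_mem_periodicPts {α : Type*} [Finite α] [Nonempty α] (f : α → α) :
    ∃ x, x ∈ periodicPts f := by
  obtain ⟨x⟩ := ‹Nonempty α›
  obtain ⟨m, n, hmn, heq⟩ := Finite.exists_ne_map_eq_of_infinite (f^[·] x)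
  wlog hlt : m < n generalizing m n
  · exact this n m hmn.symm heq.symm (by omega)
  refine ⟨f^[m] x, mk_mem_periodicPts (n := n - m) (by omega) ?_⟩
  rw [IsPeriodicPt, IsFixedPt, ← iterate_add_apply, Nat.sub_add_cancel hlt.le, heq]

theorem Finset.sum_list_count_mul {ι R : Type*} [Fintype ι] [DecidableEq ι] [NonAssocSemiring R]
    (l : List ι) (g : ι → R) : ∑ i, l.count i * g i = (l.map g).sum := by
  rw [sum_list_map_count, eq_comm]
  refine sum_subset (subset_univ _) (fun i _ hi => ?_) |>.trans (sum_congr rfl fun i _ => ?_)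
  · simp [List.count_eq_zero.mpr (by simpa using hi)]
  · rw [nsmul_eq_mul]

theorem List.Nodup.count_le_of_forall_mem_ne_zero {T : Type*} [DecidableEq T] {c : List T}
    (hc : c.Nodup) {u : T → ℕ} (hu : ∀ t ∈ c, u t ≠ 0) (t : T) : c.count t ≤ u t := by
  rw [hc.count]
  split_ifs with ht
  · exact Nat.one_le_iff_ne_zero.2 (hu t ht)
  · exact Nat.zero_le _

section Boundary

variable {Q T : Type*} [Fintype T] [DecidableEq Q] (src tgt : T → Q)

def boundary : (T → ℤ) →+ (Q → ℤ) where
  toFun u q := ∑ t, u t * ((if tgt t = q then 1 else 0) - (if src t = q then 1 else 0))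
  map_zero' := by ext; simp
  map_add' u v := by ext; simp [add_mul, sum_add_distrib]

theorem boundary_apply (u : T → ℤ) (q : Q) :
    boundary src tgt u q =
      ∑ t, u t * ((if tgt t = q then 1 else 0) - (if src t = q then 1 else 0)) :=
  rfl

theorem boundary_apply_eq_sub (u : T → ℤ) (q : Q) :
    boundary src tgt u q = ∑ t with tgt t = q, u t - ∑ t with src t = q, u t := by
  simp [boundary_apply, mul_sub, sum_sub_distrib, sum_filter]

theorem exists_src_eq_of_boundary_eq_zero {u : T → ℕ}
    (hu : boundary src tgt (fun t => (u t : ℤ)) = 0) {t₀ : T} (h₀ : u t₀ ≠ 0) :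
    ∃ t, src t = tgt t₀ ∧ u t ≠ 0 := by
  by_contra! hnone
  have hout : ∑ t with src t = tgt t₀, (u t : ℤ) = 0 :=
    sum_eq_zero fun t ht => by simp [hnone t (mem_filter.mp ht).2]
  have hin : (u t₀ : ℤ) ≤ ∑ t with tgt t = tgt t₀, (u t : ℤ) :=
    single_le_sum (f := fun t => (u t : ℤ)) (fun _ _ => by positivity) (by simp)
  have hbal := congrFun hu (tgt t₀)
  rw [boundary_apply_eq_sub, Pi.zero_apply] at hbal
  omega

variable [DecidableEq T]

theorem boundary_count_eq_zero_of_perm {c : List T} (h : (c.map tgt).Perm (c.map src)) :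
    boundary src tgt (fun t => (c.count t : ℤ)) = 0 := by
  ext q
  have := (h.map fun q' => if q' = q then (1 : ℤ) else 0).sum_eq
  simp only [List.map_map, comp_def] at this
  rw [boundary_apply, Pi.zero_apply]
  simp only [mul_sub, sum_sub_distrib, sum_list_count_mul, this, sub_self]

end Boundary

section Cycle

variable {Q T : Type*} (src tgt : T → Q)

theorem map_tgt_eq_of_isChain {a : T} {l : List T}
    (h : (a :: l).IsChain fun x y => tgt x = src y) :
    (a :: l).map tgt = l.map src ++ [tgt ((a :: l).getLast (List.cons_ne_nil a l))] := by
  induction l generalizing a with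
  | nil => rfl
  | cons b l ih =>
    rw [List.isChain_cons_cons] at h
    rw [List.map_cons, ih h.2, h.1, List.getLast_cons_cons]
    rfl

theorem IsCycle.map_tgt_eq_rotate {c : List T} (hc : IsCycle src tgt c) :
    c.map tgt = (c.map src).rotate 1 := by
  obtain ⟨hne, hchain, hclose⟩ := hc
  obtain ⟨a, l, rfl⟩ := List.exists_cons_of_ne_nil hne
  rw [map_tgt_eq_of_isChain src tgt hchain, hclose]
  simp

theorem isCycle_map_range_iterate {α : Type*} (f : α → T) (g : α → α)
    (hg : ∀ a, src (f (g a)) = tgt (f a)) {x : α} {n : ℕ} (hn : 0 < n) (hx : g^[n] x = x) :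
    IsCycle src tgt ((List.range n).map fun k => f (g^[k] x)) := by
  obtain ⟨m, rfl⟩ := Nat.exists_eq_add_one_of_ne_zero hn.ne'
  refine ⟨by simp, ?_, fun _ => ?_⟩
  · rw [List.Chain', List.isChain_map, List.isChain_range_succ]
    intro k _
    rw [iterate_succ_apply', hg]
  · simp only [List.getLast_map, List.getLast_range, add_tsub_cancel_right, List.head_map,
      List.head_range, iterate_zero, id_eq]
    rw [← hg, ← iterate_succ_apply' g, hx]

theorem exists_isCycle_nodup_of_forall_exists_src_eq [Finite T] {P : T → Prop}
    (hP : ∀ t, P t → ∃ t', src t' = tgt t ∧ P t') {t₀ : T} (h₀ : P t₀) :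
    ∃ c, IsCycle src tgt c ∧ c.Nodup ∧ ∀ t ∈ c, P t := by
  choose g hg using fun t : {t // P t} => hP t.1 t.2
  let g' : {t // P t} → {t // P t} := fun t => ⟨g t, (hg t).2⟩
  have : Nonempty {t // P t} := ⟨⟨t₀, h₀⟩⟩
  obtain ⟨x, hx⟩ := exists_mem_periodicPts g'
  refine ⟨(List.range (minimalPeriod g' x)).map fun k => (g'^[k] x).1,
    isCycle_map_range_iterate src tgt Subtype.val g' (fun a => (hg a).1)
      (minimalPeriod_pos_of_mem_periodicPts hx) iterate_minimalPeriod,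
    ?_, by simpa using fun k _ => (g'^[k] x).2⟩
  exact List.nodup_range.map_on fun a ha b hb h =>
    iterate_injOn_Iio_minimalPeriod (by simpa using ha) (by simpa using hb) (Subtype.ext h)

end Cycle

section Decomposition

variable {Q T : Type*} [Fintype T] [DecidableEq Q] [DecidableEq T] (src tgt : T → Q)

theorem IsCycle.boundary_count_eq_zero {c : List T} (hc : IsCycle src tgt c) :
    boundary src tgt (fun t => (c.count t : ℤ)) = 0 :=
  boundary_count_eq_zero_of_perm src tgt (hc.map_tgt_eq_rotate ▸ List.rotate_perm _ _)

theorem boundary_sum_count_eq_zero {cs : List (List T)} (hcs : ∀ c ∈ cs, IsCycle src tgt c) :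
    boundary src tgt (fun t => (((cs.map (·.count t)).sum : ℕ) : ℤ)) = 0 := by
  induction cs with
  | nil => exact map_zero _
  | cons c cs ih =>
    have hsplit : (fun t => ((((c :: cs).map (·.count t)).sum : ℕ) : ℤ)) =
        (fun t => (c.count t : ℤ)) + fun t => (((cs.map (·.count t)).sum : ℕ) : ℤ) := by
      ext; simp
    rw [hsplit, map_add, (hcs c (by simp)).boundary_count_eq_zero,
      ih fun c' h => hcs c' (by simp [h]), add_zero]

theorem exists_cycles_of_boundary_eq_zero (u : T → ℕ)
    (hu : boundary src tgt (fun t => (u t : ℤ)) = 0) :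
    ∃ cs : List (List T), (∀ c ∈ cs, IsCycle src tgt c) ∧
      ∀ t, u t = (cs.map (·.count t)).sum := by
  induction hn : ∑ t, u t using Nat.strong_induction_on generalizing u with
  | _ n ih =>
  by_cases hzero : u = 0
  · exact ⟨[], by simp, by simp [hzero]⟩
  obtain ⟨t₀, h₀⟩ := Function.ne_iff.mp hzero
  obtain ⟨c, hc, hnodup, hsupp⟩ := exists_isCycle_nodup_of_forall_exists_src_eq src tgt
    (P := (u · ≠ 0)) (fun _ ht => exists_src_eq_of_boundary_eq_zero src tgt hu ht) h₀
  have hle := hnodup.count_le_of_forall_mem_ne_zero hsupp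
  set v := fun t => u t - c.count t
  have hv : boundary src tgt (fun t => (v t : ℤ)) = 0 := by
    have hsplit : (fun t => (u t : ℤ)) = (fun t => (v t : ℤ)) + fun t => (c.count t : ℤ) := by
      ext t; simp [v, hle t]
    rwa [hsplit, map_add, hc.boundary_count_eq_zero, add_zero] at hu
  have hlt : ∑ t, v t < n := by
    obtain ⟨a, ha⟩ := List.exists_mem_of_ne_nil c hc.1
    have hpos := List.count_pos_iff.2 ha
    have hdrop : u a - c.count a < u a := by have := hle a; omega
    exact hn ▸ sum_lt_sum (fun t _ => Nat.sub_le _ _) ⟨a, mem_univ a, hdrop⟩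
  obtain ⟨cs, hcs, hvcs⟩ := ih _ hlt v hv rfl
  refine ⟨c :: cs, List.forall_mem_cons.2 ⟨hc, hcs⟩, fun t => ?_⟩
  have := hle t
  simp only [List.map_cons, List.sum_cons, ← hvcs t, v]
  omega

end Decomposition

theorem flow_iff_sum_of_cycles_general {Q T : Type*} [Fintype T]
    [DecidableEq Q] [DecidableEq T] (src tgt : T → Q) (u : T → ℕ) :
    (∀ q : Q, ∑ t : T, (u t : ℤ) *
        ((if tgt t = q then 1 else 0) - (if src t = q then 1 else 0)) = 0) ↔
    ∃ cs : List (List T), (∀ c ∈ cs, IsCycle src tgt c) ∧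
      ∀ t : T, u t = (cs.map (fun c => c.count t)).sum := by
  constructor
  · exact fun hu => exists_cycles_of_boundary_eq_zero src tgt u (funext hu)
  · rintro ⟨cs, hcs, hu⟩
    obtain rfl : u = fun t => (cs.map (·.count t)).sum := funext hu
    exact congrFun (boundary_sum_count_eq_zero src tgt hcs)

theorem flow_iff_sum_of_cycles {Q T : Type*} [Fintype Q] [Fintype T]
    [DecidableEq Q] [DecidableEq T] (src tgt : T → Q) (u : T → ℕ) :
    (∀ q : Q, ∑ t : T, (u t : ℤ) *
        ((if tgt t = q then 1 else 0) - (if src t = q then 1 else 0)) = 0) ↔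
    ∃ cs : List (List T), (∀ c ∈ cs, IsCycle src tgt c) ∧
      ∀ t : T, u t = (cs.map (fun c => c.count t)).sum :=
  flow_iff_sum_of_cycles_general src tgt u
end

section
/- Every non-empty recognizable subset of the group (ℤ, +) is infinite. Consequently, the sets {0} and ℤ \ {0} are not separable by a recognizable subset of ℤ, even though they are separable by a set definable by a monadic Presburger formula over ℤ. -/
/-- A subset of `(ℤ, +)` is recognizable if it is the full preimage of its image
under an additive monoid homomorphism into a finite additive monoid. -/
def RecognizableZ (S : Set ℤ) : Prop :=
  ∃ (F : Type) (_ : AddMonoid F) (_ : Finite F) (φ : ℤ →+ F), φ ⁻¹' (φ '' S) = S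

/-- A subset of `ℤ` definable by a monadic Presburger formula: it is ultimately
periodic in both directions. -/
def MonadicDefinableZ (S : Set ℤ) : Prop :=
  ∃ (n0 : ℤ) (p : ℤ), 1 ≤ p ∧ (∀ n ≥ n0, (n ∈ S ↔ n + p ∈ S)) ∧
    (∀ n ≤ -n0, (n ∈ S ↔ n - p ∈ S))

/-!
A homomorphism from an infinite group to a finite monoid cannot be injective, so its kernel is a
nontrivial subgroup, which is infinite in the torsion-free group `ℤ`. A set saturated by the
homomorphism is a union of cosets of the kernel, hence infinite as soon as it is non-empty.
-/

theorem AddSubgroup.infinite_of_ne_bot {G : Type*} [AddGroup G] [IsAddTorsionFree G]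
    {H : AddSubgroup G} (hH : H ≠ ⊥) : (H : Set G).Infinite := by
  obtain ⟨d, hdH, hd⟩ := H.bot_or_exists_ne_zero.resolve_left hH
  exact (infinite_zmultiples.2 (not_isOfFinAddOrder_of_isAddTorsionFree hd)).mono
    (AddSubgroup.zmultiples_le_of_mem hdH)

open scoped Pointwise

namespace AddMonoidHom

variable {G M : Type*} [AddGroup G] [AddZeroClass M]

theorem ker_ne_bot_of_finite [Infinite G] [Finite M] (φ : G →+ M) : φ.ker ≠ ⊥ :=
  fun h ↦ not_injective_infinite_finite φ (φ.ker_eq_bot_iff.1 h)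

theorem vadd_ker_subset_of_preimage_image_eq (φ : G →+ M) {S : Set G}
    (hS : φ ⁻¹' (φ '' S) = S) {s : G} (hs : s ∈ S) : s +ᵥ (φ.ker : Set G) ⊆ S := by
  rintro _ ⟨k, hk, rfl⟩
  rw [← hS]
  exact ⟨s, hs, show φ s = φ (s + k) by rw [map_add, φ.mem_ker.1 hk, add_zero]⟩

end AddMonoidHom

theorem RecognizableZ.infinite {S : Set ℤ} (hS : RecognizableZ S) (hne : S.Nonempty) :
    S.Infinite := by
  obtain ⟨F, _, _, φ, hφ⟩ := hS
  obtain ⟨s, hs⟩ := hne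
  exact ((AddSubgroup.infinite_of_ne_bot φ.ker_ne_bot_of_finite).vadd_set).mono
    (φ.vadd_ker_subset_of_preimage_image_eq hφ hs)

theorem monadicDefinableZ_singleton_zero : MonadicDefinableZ {0} :=
  ⟨1, 1, le_rfl, fun n hn ↦ by simp only [Set.mem_singleton_iff]; omega,
    fun n hn ↦ by simp only [Set.mem_singleton_iff]; omega⟩

theorem recognizable_subsets_of_Z_infinite :
    (∀ S : Set ℤ, RecognizableZ S → S.Nonempty → S.Infinite) ∧
    (¬ ∃ S : Set ℤ, RecognizableZ S ∧ {(0 : ℤ)} ⊆ S ∧ S ∩ {n : ℤ | n ≠ 0} = ∅) ∧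
    (∃ S : Set ℤ, MonadicDefinableZ S ∧ {(0 : ℤ)} ⊆ S ∧ S ∩ {n : ℤ | n ≠ 0} = ∅) := by
  refine ⟨fun _ ↦ RecognizableZ.infinite, ?_, ⟨{0}, monadicDefinableZ_singleton_zero, le_rfl, ?_⟩⟩
  · rintro ⟨S, hS, h0, hdisj⟩
    have hS0 : S ⊆ {0} := fun x hx ↦
      by_contra fun hx0 ↦ Set.eq_empty_iff_forall_notMem.1 hdisj x ⟨hx, hx0⟩
    exact hS.infinite ⟨0, h0 rfl⟩ ((Set.finite_singleton 0).subset hS0)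
  · ext x
    simp
end
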